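/- Let q, r be natural numbers, a : Fin (q+1) → (Fin r → ℤ), and let the torus T = (Fin r → ℂˣ) act on ℂ^{q+1} by (t • z) j = (∏ i, (t i : ℂ) ^ (−(a j i))) * z j, with moment map μ(z) i = (∑ j, ‖z j‖² * (a j i)) / (∑ j, ‖z j‖²). Then for every nonzero v ∈ ℂ^{q+1} the following are equivalent: (i) 0 does not lie in the Euclidean closure of the orbit { t • v : t ∈ T } (i.e., v is a semistable point for the linearized torus action on ℙ^q); (ii) there exists a nonzero w in the Euclidean closure of { c • (t • v) : c ∈ ℂˣ, t ∈ T } (the affine cone over the orbit closure of [v] in ℙ^q) with μ(w) = 0. (Kempf–Ness-type characterization of semistability by the moment map, for diagonal torus actions over ℂ.) -/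

import Mathlib

/-!
If `0 ∉ closure (T • v)`, a point `w` of minimal norm on this closed `T`-invariant set is
nonzero, and differentiating `s ↦ ‖exp (s • x) • w‖²` at `s = 0` shows that `μ(w)` pairs to zero
with every `x ∈ ℝ^r`. Conversely, if `0 ∈ closure (T • v)`, some `t ∈ T` shrinks every nonzero
coordinate of `v`, so `x = log ‖t‖` has `⟨a j, x⟩ > 0` on the support of `v`. Every `w` in the
closure of the cone over the orbit is supported there, hence `⟨μ(w), x⟩ > 0` whenever `w ≠ 0`.
-/

open Real Filter Set

namespace DiagonalTorus

variable {ι κ : Type*}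

noncomputable section

def expTorus (x : κ → ℝ) : κ → ℂˣ :=
  fun i => Units.mk0 (Complex.exp (x i)) (Complex.exp_ne_zero _)

lemma log_norm_expTorus (x : κ → ℝ) (i : κ) : log ‖(expTorus x i : ℂ)‖ = x i := by
  simp [expTorus, Complex.norm_exp_ofReal]

lemma sum_mul_eq_zero_of_forall_sum_le_sum_mul_exp [Fintype ι] {b c : ι → ℝ}
    (h : ∀ s, ∑ j, b j ≤ ∑ j, b j * exp (c j * s)) : ∑ j, b j * c j = 0 := by
  have hderiv : HasDerivAt (fun s => ∑ j, b j * exp (c j * s)) (∑ j, b j * c j) 0 := by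
    simpa using HasDerivAt.fun_sum (u := Finset.univ) fun j _ =>
      ((hasDerivAt_id (0 : ℝ)).const_mul (c j)).exp.const_mul (b j)
  refine IsLocalMin.hasDerivAt_eq_zero (Eventually.of_forall fun s => ?_) hderiv
  simpa using h s

section Action

variable [Fintype κ] (a : ι → κ → ℤ)

def torusAct (t : κ → ℂˣ) (z : ι → ℂ) : ι → ℂ :=
  fun j => (∏ i, (t i : ℂ) ^ (-(a j i))) * z j

def torusOrbit (v : ι → ℂ) : Set (ι → ℂ) :=
  {z | ∃ t : κ → ℂˣ, z = torusAct a t v}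

def torusCone (v : ι → ℂ) : Set (ι → ℂ) :=
  {z | ∃ (c : ℂˣ) (t : κ → ℂˣ), z = fun j => (c : ℂ) * torusAct a t v j}

lemma torusAct_one (z : ι → ℂ) : torusAct a 1 z = z := by
  ext j
  simp [torusAct]

lemma torusAct_mul (t s : κ → ℂˣ) (z : ι → ℂ) :
    torusAct a (t * s) z = torusAct a t (torusAct a s z) := by
  ext j
  simp only [torusAct, Pi.mul_apply, Units.val_mul, mul_zpow, Finset.prod_mul_distrib]
  ring

lemma continuous_torusAct (t : κ → ℂˣ) : Continuous (torusAct a t) :=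
  continuous_pi fun j => continuous_const.mul (continuous_apply j)

lemma norm_torusAct_apply (t : κ → ℂˣ) (z : ι → ℂ) (j : ι) :
    ‖torusAct a t z j‖ = exp (-∑ i, (a j i : ℝ) * log ‖(t i : ℂ)‖) * ‖z j‖ := by
  have ht : ∀ i, 0 < ‖(t i : ℂ)‖ := fun i => norm_pos_iff.mpr (t i).ne_zero
  rw [torusAct, norm_mul, norm_prod, ← Finset.sum_neg_distrib, exp_sum]
  congr 1
  refine Finset.prod_congr rfl fun i _ => ?_
  rw [norm_zpow, ← rpow_intCast, rpow_def_of_pos (ht i)]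
  push_cast
  ring_nf

lemma self_mem_torusOrbit (v : ι → ℂ) : v ∈ torusOrbit a v :=
  ⟨1, (torusAct_one a v).symm⟩

lemma torusOrbit_subset_torusCone (v : ι → ℂ) : torusOrbit a v ⊆ torusCone a v := by
  rintro _ ⟨t, rfl⟩
  exact ⟨1, t, by simp⟩

lemma mapsTo_torusAct_closure_torusOrbit (t : κ → ℂˣ) (v : ι → ℂ) :
    MapsTo (torusAct a t) (closure (torusOrbit a v)) (closure (torusOrbit a v)) := by
  refine MapsTo.closure ?_ (continuous_torusAct a t)
  rintro _ ⟨s, rfl⟩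
  exact ⟨t * s, (torusAct_mul a t s v).symm⟩

lemma eq_zero_of_mem_closure_torusCone {v w : ι → ℂ} (hw : w ∈ closure (torusCone a v))
    {j : ι} (hj : v j = 0) : w j = 0 := by
  have hclosed : IsClosed {z : ι → ℂ | z j = 0} :=
    isClosed_eq (continuous_apply j) continuous_const
  refine hclosed.closure_subset_iff.mpr ?_ hw
  rintro _ ⟨c, t, rfl⟩
  simp [torusAct, hj]

lemma exists_weight_pos_of_zero_mem_closure_torusOrbit [Finite ι] {v : ι → ℂ}
    (h0 : 0 ∈ closure (torusOrbit a v)) :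
    ∃ x : κ → ℝ, ∀ j, v j ≠ 0 → 0 < ∑ i, (a j i : ℝ) * x i := by
  have hU : IsOpen {z : ι → ℂ | ∀ j, v j ≠ 0 → ‖z j‖ < ‖v j‖} := by
    simp only [ofPred_forall]
    exact isOpen_iInter_of_finite fun j => isOpen_iInter_of_finite fun _ =>
      isOpen_lt (continuous_apply j).norm continuous_const
  obtain ⟨_, hshrink, t, rfl⟩ := mem_closure_iff.mp h0 _ hU fun j hj => by simpa using hj
  refine ⟨fun i => log ‖(t i : ℂ)‖, fun j hj => ?_⟩
  have hj_shrink := hshrink j hj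
  rwa [norm_torusAct_apply, mul_lt_iff_lt_one_left (norm_pos_iff.mpr hj), exp_lt_one_iff,
    neg_lt_zero] at hj_shrink

end Action

section Norm

variable [Fintype ι]

def normSq (z : ι → ℂ) : ℝ := ∑ j, ‖z j‖ ^ 2

lemma continuous_normSq : Continuous (normSq : (ι → ℂ) → ℝ) :=
  continuous_finsetSum _ fun j _ => (continuous_apply j).norm.pow 2

lemma sq_norm_le_normSq (z : ι → ℂ) : ‖z‖ ^ 2 ≤ normSq z := by
  rw [normSq, ← le_sqrt (norm_nonneg z) (Finset.sum_nonneg fun j _ => sq_nonneg _)]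
  refine (pi_norm_le_iff_of_nonneg (sqrt_nonneg _)).mpr fun j => ?_
  rw [le_sqrt (norm_nonneg _) (Finset.sum_nonneg fun j _ => sq_nonneg _)]
  exact Finset.single_le_sum (fun j _ => sq_nonneg ‖z j‖) (Finset.mem_univ j)

lemma tendsto_normSq_cocompact_atTop : Tendsto (normSq : (ι → ℂ) → ℝ) (cocompact _) atTop :=
  tendsto_atTop_mono sq_norm_le_normSq <|
    (tendsto_pow_atTop two_ne_zero).comp tendsto_norm_cocompact_atTop

lemma _root_.IsClosed.exists_isMinOn_normSq {S : Set (ι → ℂ)} (hS : IsClosed S) {z : ι → ℂ}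
    (hz : z ∈ S) : ∃ w ∈ S, IsMinOn normSq S w :=
  continuous_normSq.continuousOn.exists_isMinOn' hS hz <|
    (tendsto_normSq_cocompact_atTop.eventually_ge_atTop _).filter_mono inf_le_left

lemma normSq_pos {z : ι → ℂ} (hz : z ≠ 0) : 0 < normSq z := by
  obtain ⟨j, hj⟩ := Function.ne_iff.mp hz
  exact Finset.sum_pos' (fun j _ => sq_nonneg _) ⟨j, Finset.mem_univ j, by positivity⟩

def momentMap (a : ι → κ → ℤ) (w : ι → ℂ) (i : κ) : ℝ :=
  (∑ j, ‖w j‖ ^ 2 * (a j i : ℝ)) / normSq w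

lemma momentMap_eq_zero_iff (a : ι → κ → ℤ) {w : ι → ℂ} (hw : w ≠ 0) (i : κ) :
    momentMap a w i = 0 ↔ ∑ j, ‖w j‖ ^ 2 * (a j i : ℝ) = 0 := by
  rw [momentMap, div_eq_zero_iff, or_iff_left (normSq_pos hw).ne']

variable [Fintype κ] (a : ι → κ → ℤ)

lemma sum_moment_mul_eq_sum_normSq_mul (w : ι → ℂ) (x : κ → ℝ) :
    ∑ i, (∑ j, ‖w j‖ ^ 2 * (a j i : ℝ)) * x i = ∑ j, ‖w j‖ ^ 2 * ∑ i, (a j i : ℝ) * x i := by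
  simp only [Finset.sum_mul, Finset.mul_sum, mul_assoc]
  exact Finset.sum_comm

lemma normSq_torusAct_expTorus (x : κ → ℝ) (z : ι → ℂ) :
    normSq (torusAct a (expTorus x) z) =
      ∑ j, ‖z j‖ ^ 2 * exp (-2 * ∑ i, (a j i : ℝ) * x i) := by
  refine Finset.sum_congr rfl fun j _ => ?_
  rw [norm_torusAct_apply, mul_pow, ← exp_nat_mul]
  simp only [log_norm_expTorus]
  push_cast
  ring_nf

lemma sum_normSq_mul_weight_eq_zero_of_isMinOn {S : Set (ι → ℂ)}
    (hS : ∀ t, MapsTo (torusAct a t) S S) {w : ι → ℂ} (hw : w ∈ S) (hmin : IsMinOn normSq S w)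
    (x : κ → ℝ) : ∑ j, ‖w j‖ ^ 2 * ∑ i, (a j i : ℝ) * x i = 0 := by
  have hline : ∀ s, ∑ j, ‖w j‖ ^ 2 ≤
      ∑ j, ‖w j‖ ^ 2 * exp ((-2 * ∑ i, (a j i : ℝ) * x i) * s) := by
    intro s
    have h : normSq w ≤ normSq (torusAct a (expTorus (s • x)) w) := hmin (hS _ hw)
    rw [normSq_torusAct_expTorus] at h
    refine h.trans_eq (Finset.sum_congr rfl fun j _ => ?_)
    rw [mul_assoc, Finset.sum_mul]
    congr 3
    refine Finset.sum_congr rfl fun i _ => ?_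
    rw [Pi.smul_apply, smul_eq_mul]
    ring
  have h := sum_mul_eq_zero_of_forall_sum_le_sum_mul_exp hline
  simp only [mul_left_comm _ (-2 : ℝ), ← Finset.mul_sum] at h
  linarith

lemma zero_notMem_closure_torusOrbit {v w : ι → ℂ} (hw : w ∈ closure (torusCone a v))
    (hw0 : w ≠ 0) (hμ : ∀ i, ∑ j, ‖w j‖ ^ 2 * (a j i : ℝ) = 0) :
    (0 : ι → ℂ) ∉ closure (torusOrbit a v) := by
  intro h0
  obtain ⟨x, hx⟩ := exists_weight_pos_of_zero_mem_closure_torusOrbit a h0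
  have hxw : ∀ j, w j ≠ 0 → 0 < ∑ i, (a j i : ℝ) * x i := fun j hj =>
    hx j (mt (eq_zero_of_mem_closure_torusCone a hw) hj)
  obtain ⟨j₀, hj₀⟩ := Function.ne_iff.mp hw0
  have hpos : 0 < ∑ j, ‖w j‖ ^ 2 * ∑ i, (a j i : ℝ) * x i := by
    refine Finset.sum_pos' (fun j _ => ?_) ⟨j₀, Finset.mem_univ _, ?_⟩
    · by_cases hj : w j = 0
      · simp [hj]
      · exact (mul_pos (by positivity) (hxw j hj)).le
    · exact mul_pos (by positivity) (hxw j₀ hj₀)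
  rw [← sum_moment_mul_eq_sum_normSq_mul] at hpos
  simp [hμ] at hpos

end Norm

end

end DiagonalTorus

open DiagonalTorus in
theorem semistable_iff_momentMap_zero_general (q r : ℕ) (a : Fin (q + 1) → Fin r → ℤ)
    (v : Fin (q + 1) → ℂ) :
    ((0 : Fin (q + 1) → ℂ) ∉ closure {z : Fin (q + 1) → ℂ |
        ∃ t : Fin r → ℂˣ, z = fun j => (∏ i, (t i : ℂ) ^ (-(a j i))) * v j})
      ↔ ∃ w ∈ closure {z : Fin (q + 1) → ℂ | ∃ (c : ℂˣ) (t : Fin r → ℂˣ),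
            z = fun j => (c : ℂ) * ((∏ i, (t i : ℂ) ^ (-(a j i))) * v j)},
          w ≠ 0 ∧ ∀ i : Fin r,
            (∑ j, ‖w j‖ ^ 2 * (a j i : ℝ)) / (∑ j, ‖w j‖ ^ 2) = 0 := by
  change 0 ∉ closure (torusOrbit a v) ↔
    ∃ w ∈ closure (torusCone a v), w ≠ 0 ∧ ∀ i, momentMap a w i = 0
  constructor
  · intro hss
    obtain ⟨w, hw, hmin⟩ :=
      isClosed_closure.exists_isMinOn_normSq (subset_closure (self_mem_torusOrbit a v))
    have hw0 : w ≠ 0 := by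
      rintro rfl
      exact hss hw
    refine ⟨w, closure_mono (torusOrbit_subset_torusCone a v) hw, hw0, fun i => ?_⟩
    rw [momentMap_eq_zero_iff a hw0]
    simpa [Pi.single_apply] using sum_normSq_mul_weight_eq_zero_of_isMinOn a
      (mapsTo_torusAct_closure_torusOrbit a · v) hw hmin (Pi.single i 1)
  · rintro ⟨w, hw, hw0, hμ⟩
    exact zero_notMem_closure_torusOrbit a hw hw0 fun i =>
      (momentMap_eq_zero_iff a hw0 i).mp (hμ i)

/-- **Kempf–Ness-type characterization of semistability by the moment map**
(for diagonal torus actions over `ℂ`).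

For the torus `T = (Fin r → ℂˣ)` acting on `ℂ^{q+1}` with weights `a j`, a
nonzero vector `v` is semistable (i.e. `0` is not in the closure of its
`T`-orbit) if and only if the zero level set of the moment map
`μ w i = (∑ j, ‖w j‖² * a j i) / (∑ j, ‖w j‖²)` meets the affine cone over the
orbit closure of `[v]` away from the origin. -/
theorem semistable_iff_momentMap_zero (q r : ℕ) (a : Fin (q + 1) → Fin r → ℤ)
    (v : Fin (q + 1) → ℂ) (hv : v ≠ 0) :
    ((0 : Fin (q + 1) → ℂ) ∉ closure {z : Fin (q + 1) → ℂ |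
        ∃ t : Fin r → ℂˣ, z = fun j => (∏ i, (t i : ℂ) ^ (-(a j i))) * v j})
      ↔ ∃ w ∈ closure {z : Fin (q + 1) → ℂ | ∃ (c : ℂˣ) (t : Fin r → ℂˣ),
            z = fun j => (c : ℂ) * ((∏ i, (t i : ℂ) ^ (-(a j i))) * v j)},
          w ≠ 0 ∧ ∀ i : Fin r,
            (∑ j, ‖w j‖ ^ 2 * (a j i : ℝ)) / (∑ j, ‖w j‖ ^ 2) = 0 :=
  semistable_iff_momentMap_zero_general q r a v
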